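/- Let E be a real Banach space, P ⊆ E a normal cone with nonempty interior, and (X, d) a complete extended cone b-metric space over P, where d is a continuous functional. Let f : X → X be asymptotically regular and satisfy d(f(x), f(y)) ≤ s·[d(x, f(x)) + d(y, f(y))] for all x, y ∈ X, where s ∈ (0, 1). Then f has a unique fixed point u ∈ X, and for each x ∈ X the sequence (fⁿ(x)) converges to u. -/

import Mathlib

/-!
The Kannan condition together with normality of the cone bounds `‖d (f x) (f y)‖` by
`N * ‖s • (d x (f x) + d y (f y))‖`, so asymptotic regularity makes `(f (fⁿ x))` Cauchy.
Its limit `l` is fixed: passing to the limit in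
`d (fⁿ⁺¹ x) (f l) ≤ s • (d (fⁿ x) (fⁿ⁺¹ x) + d l (f l))`, using continuity of `d` and closedness
of `P`, gives `d l (f l) ≤ s • d l (f l)`, which forces `d l (f l) = 0` as `s < 1`.
Applied to two fixed points the Kannan condition gives `d u v ≤ 0`, whence uniqueness.
-/

open Filter Topology

section ConeMetric

variable {E X : Type*} [NormedAddCommGroup E] {P : Set E} {d : X → X → E}

def ConeTendsto (P : Set E) (d : X → X → E) (x : ℕ → X) (a : X) : Prop :=
  ∀ u ∈ interior P, ∃ M : ℕ, ∀ n ≥ M, u - d (x n) a ∈ interior P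

def ConeCauchySeq (P : Set E) (d : X → X → E) (x : ℕ → X) : Prop :=
  ∀ u ∈ interior P, ∃ M : ℕ, ∀ n ≥ M, ∀ m ≥ M, u - d (x n) (x m) ∈ interior P

theorem eventually_sub_mem_interior_of_tendsto_zero {ι : Type*} {l : Filter ι} {F : ι → E}
    (hF : Tendsto F l (𝓝 0)) {u : E} (hu : u ∈ interior P) :
    ∀ᶠ i in l, u - F i ∈ interior P := by
  have h : Tendsto (fun i => u - F i) l (𝓝 u) := by
    simpa using (tendsto_const_nhds (x := u)).sub hF
  exact h (isOpen_interior.mem_nhds hu)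

theorem ConeCauchySeq.of_tendsto_zero {x : ℕ → X}
    (hx : Tendsto (fun p : ℕ × ℕ => d (x p.1) (x p.2)) (atTop ×ˢ atTop) (𝓝 0)) :
    ConeCauchySeq P d x := fun u hu =>
  (eventually_atTop_prod_self' (α := ℕ)).mp <| by
    rw [← prod_atTop_atTop_eq]
    exact eventually_sub_mem_interior_of_tendsto_zero hx hu

theorem ConeTendsto.of_succ {x : ℕ → X} {a : X} (hx : ConeTendsto P d (fun n => x (n + 1)) a) :
    ConeTendsto P d x a := by
  intro u hu
  obtain ⟨M, hM⟩ := hx u hu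
  refine ⟨M + 1, fun n hn => ?_⟩
  obtain ⟨k, rfl⟩ : ∃ k, n = k + 1 := ⟨n - 1, by omega⟩
  exact hM k (by omega)

theorem coneTendsto_const {a : X} (ha : d a a = 0) : ConeTendsto P d (fun _ => a) a :=
  fun u hu => ⟨0, fun _ _ => by simpa [ha] using hu⟩

theorem eq_zero_of_smul_sub_mem [NormedSpace ℝ E]
    (hP_conv : ∀ (a b : ℝ), 0 ≤ a → 0 ≤ b → ∀ x ∈ P, ∀ y ∈ P, a • x + b • y ∈ P)
    (hP_pointed : ∀ x ∈ P, -x ∈ P → x = (0 : E))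
    {s : ℝ} (hs : s < 1) {c : E} (hc : c ∈ P) (hsc : s • c - c ∈ P) : c = 0 := by
  have hpos : (1 - s) • c ∈ P := by
    simpa using hP_conv (1 - s) 0 (by linarith) le_rfl c hc c hc
  have hneg : -((1 - s) • c) ∈ P := by
    convert hsc using 1
    module
  have hzero := hP_pointed _ hpos hneg
  exact (smul_eq_zero.mp hzero).resolve_left (by linarith)

end ConeMetric

section Kannan

variable {E X : Type*} [NormedAddCommGroup E] [NormedSpace ℝ E] {P : Set E} {d : X → X → E}
  {f : X → X} {s : ℝ}

theorem tendsto_kannan_map_map_zero {N : ℝ}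
    (hN : ∀ a b : E, a ∈ P → b - a ∈ P → ‖a‖ ≤ N * ‖b‖) (hd_nonneg : ∀ x y, d x y ∈ P)
    (hf : ∀ x y : X, s • (d x (f x) + d y (f y)) - d (f x) (f y) ∈ P)
    {x : ℕ → X} (hx : Tendsto (fun n => d (x n) (f (x n))) atTop (𝓝 0)) :
    Tendsto (fun p : ℕ × ℕ => d (f (x p.1)) (f (x p.2))) (atTop ×ˢ atTop) (𝓝 0) := by
  have hbound : Tendsto (fun p : ℕ × ℕ =>
      N * ‖s • (d (x p.1) (f (x p.1)) + d (x p.2) (f (x p.2)))‖) (atTop ×ˢ atTop) (𝓝 0) := by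
    simpa using (((hx.comp tendsto_fst).add (hx.comp tendsto_snd)).const_smul s).norm.const_mul N
  exact squeeze_zero_norm (fun p => hN _ _ (hd_nonneg _ _) (hf _ _)) hbound

theorem isFixedPt_of_kannan_of_coneTendsto
    (hP_closed : IsClosed P)
    (hP_conv : ∀ (a b : ℝ), 0 ≤ a → 0 ≤ b → ∀ x ∈ P, ∀ y ∈ P, a • x + b • y ∈ P)
    (hP_pointed : ∀ x ∈ P, -x ∈ P → x = (0 : E))
    (hd_nonneg : ∀ x y, d x y ∈ P) (hd_eq_zero : ∀ x y, d x y = 0 ↔ x = y)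
    (hd_cont : ∀ (x y : ℕ → X) (a b : X), ConeTendsto P d x a → ConeTendsto P d y b →
      Tendsto (fun n => d (x n) (y n)) atTop (𝓝 (d a b)))
    (hs1 : s < 1) (hf : ∀ x y : X, s • (d x (f x) + d y (f y)) - d (f x) (f y) ∈ P)
    {x : ℕ → X} (hx : Tendsto (fun n => d (x n) (f (x n))) atTop (𝓝 0))
    {l : X} (hl : ConeTendsto P d (fun n => f (x n)) l) : f l = l := by
  have hdist : Tendsto (fun n => d (f (x n)) (f l)) atTop (𝓝 (d l (f l))) :=
    hd_cont _ _ _ _ hl (coneTendsto_const ((hd_eq_zero _ _).mpr rfl))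
  have hlim : Tendsto (fun n => s • (d (x n) (f (x n)) + d l (f l)) - d (f (x n)) (f l))
      atTop (𝓝 (s • ((0 : E) + d l (f l)) - d l (f l))) :=
    ((hx.add tendsto_const_nhds).const_smul s).sub hdist
  have hmem : s • d l (f l) - d l (f l) ∈ P := by
    simpa using hP_closed.mem_of_tendsto hlim (Eventually.of_forall fun n => hf (x n) l)
  have hzero := eq_zero_of_smul_sub_mem hP_conv hP_pointed hs1 (hd_nonneg l (f l)) hmem
  exact ((hd_eq_zero _ _).mp hzero).symm

theorem eq_of_kannan_of_isFixedPt
    (hP_pointed : ∀ x ∈ P, -x ∈ P → x = (0 : E))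
    (hd_nonneg : ∀ x y, d x y ∈ P) (hd_eq_zero : ∀ x y, d x y = 0 ↔ x = y)
    (hf : ∀ x y : X, s • (d x (f x) + d y (f y)) - d (f x) (f y) ∈ P)
    {u v : X} (hu : f u = u) (hv : f v = v) : u = v := by
  have h := hf u v
  rw [hu, hv, (hd_eq_zero u u).mpr rfl, (hd_eq_zero v v).mpr rfl, add_zero, smul_zero,
    zero_sub] at h
  exact (hd_eq_zero u v).mp (hP_pointed _ (hd_nonneg u v) h)

theorem exists_isFixedPt_coneTendsto_iterate {N : ℝ}
    (hP_closed : IsClosed P)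
    (hP_conv : ∀ (a b : ℝ), 0 ≤ a → 0 ≤ b → ∀ x ∈ P, ∀ y ∈ P, a • x + b • y ∈ P)
    (hP_pointed : ∀ x ∈ P, -x ∈ P → x = (0 : E))
    (hN : ∀ a b : E, a ∈ P → b - a ∈ P → ‖a‖ ≤ N * ‖b‖)
    (hd_nonneg : ∀ x y, d x y ∈ P) (hd_eq_zero : ∀ x y, d x y = 0 ↔ x = y)
    (hd_symm : ∀ x y, d x y = d y x)
    (hd_cont : ∀ (x y : ℕ → X) (a b : X), ConeTendsto P d x a → ConeTendsto P d y b →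
      Tendsto (fun n => d (x n) (y n)) atTop (𝓝 (d a b)))
    (hcomplete : ∀ x : ℕ → X, ConeCauchySeq P d x → ∃ l : X, ConeTendsto P d x l)
    (hs1 : s < 1) (hf : ∀ x y : X, s • (d x (f x) + d y (f y)) - d (f x) (f y) ∈ P)
    (x : X) (hreg : Tendsto (fun n => ‖d (f^[n + 1] x) (f^[n] x)‖) atTop (𝓝 0)) :
    ∃ l : X, f l = l ∧ ConeTendsto P d (fun n => f^[n] x) l := by
  have hstep : Tendsto (fun n => d (f^[n] x) (f (f^[n] x))) atTop (𝓝 0) := by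
    rw [tendsto_zero_iff_norm_tendsto_zero]
    simpa only [hd_symm (f^[_] x), Function.iterate_succ_apply'] using hreg
  have hcauchy : ConeCauchySeq P d (fun n => f (f^[n] x)) :=
    .of_tendsto_zero (tendsto_kannan_map_map_zero hN hd_nonneg hf hstep)
  obtain ⟨l, hl⟩ := hcomplete _ hcauchy
  refine ⟨l, isFixedPt_of_kannan_of_coneTendsto hP_closed hP_conv hP_pointed hd_nonneg
    hd_eq_zero hd_cont hs1 hf hstep hl, .of_succ ?_⟩
  simpa only [Function.iterate_succ_apply'] using hl

end Kannan
theorem stmt_12_general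
    {E : Type*} [NormedAddCommGroup E] [NormedSpace ℝ E]
    {X : Type*} [Nonempty X]
    (P : Set E)
    (hP_closed : IsClosed P)
    (hP_conv : ∀ (a b : ℝ), 0 ≤ a → 0 ≤ b → ∀ x ∈ P, ∀ y ∈ P, a • x + b • y ∈ P)
    (hP_pointed : ∀ x ∈ P, -x ∈ P → x = (0 : E))
    (d : X → X → E)
    (hd_nonneg : ∀ x y, d x y ∈ P)
    (hd_eq_zero : ∀ x y, d x y = 0 ↔ x = y)
    (hd_symm : ∀ x y, d x y = d y x)
    (hP_normal : ∃ N : ℝ, 0 < N ∧ ∀ a b : E, a ∈ P → b - a ∈ P → ‖a‖ ≤ N * ‖b‖)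
    (hd_cont : ∀ (x y : ℕ → X) (a b : X),
        (∀ u ∈ interior P, ∃ M : ℕ, ∀ n ≥ M, u - d (x n) a ∈ interior P) →
        (∀ u ∈ interior P, ∃ M : ℕ, ∀ n ≥ M, u - d (y n) b ∈ interior P) →
        Tendsto (fun n => d (x n) (y n)) atTop (nhds (d a b)))
    (hcomplete : ∀ x : ℕ → X,
        (∀ u ∈ interior P, ∃ M : ℕ, ∀ n ≥ M, ∀ m ≥ M, u - d (x n) (x m) ∈ interior P) →
        ∃ l : X, ∀ u ∈ interior P, ∃ M : ℕ, ∀ n ≥ M, u - d (x n) l ∈ interior P)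
    (f : X → X)
    (hreg : ∀ x : X,
        Tendsto (fun n => ‖d (f^[n + 1] x) (f^[n] x)‖) atTop (nhds 0))
    (s : ℝ) (hs1 : s < 1)
    (hf : ∀ x y : X, s • (d x (f x) + d y (f y)) - d (f x) (f y) ∈ P) :
    ∃ u : X, f u = u ∧ (∀ v : X, f v = v → v = u) ∧
      ∀ x : X, ∀ w ∈ interior P, ∃ M : ℕ, ∀ n ≥ M, w - d (f^[n] x) u ∈ interior P := by
  obtain ⟨N, -, hN⟩ := hP_normal
  have hiter (x : X) : ∃ l : X, f l = l ∧ ConeTendsto P d (fun n => f^[n] x) l :=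
    exists_isFixedPt_coneTendsto_iterate hP_closed hP_conv hP_pointed hN hd_nonneg hd_eq_zero
      hd_symm hd_cont hcomplete hs1 hf x (hreg x)
  have huniq {u v : X} (hu : f u = u) (hv : f v = v) : u = v :=
    eq_of_kannan_of_isFixedPt hP_pointed hd_nonneg hd_eq_zero hf hu hv
  obtain ⟨u, hu, -⟩ := hiter (Classical.arbitrary X)
  refine ⟨u, hu, fun v hv => huniq hv hu, fun x => ?_⟩
  obtain ⟨l, hl, hconv⟩ := hiter x
  rwa [huniq hl hu] at hconv

theorem stmt_12
    {E : Type*} [NormedAddCommGroup E] [NormedSpace ℝ E] [CompleteSpace E]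
    {X : Type*} [Nonempty X]
    (P : Set E)
    (hP_ne : P.Nonempty) (hP_closed : IsClosed P) (hP_nontrivial : P ≠ ({0} : Set E))
    (hP_conv : ∀ (a b : ℝ), 0 ≤ a → 0 ≤ b → ∀ x ∈ P, ∀ y ∈ P, a • x + b • y ∈ P)
    (hP_pointed : ∀ x ∈ P, -x ∈ P → x = (0 : E))
    (hP_int : (interior P).Nonempty)
    (Θ : X → X → X → ℝ) (hΘ : ∀ x y z, 1 ≤ Θ x y z)
    (d : X → X → E)
    (hd_nonneg : ∀ x y, d x y ∈ P)
    (hd_eq_zero : ∀ x y, d x y = 0 ↔ x = y)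
    (hd_symm : ∀ x y, d x y = d y x)
    (hd_triangle : ∀ x y z, Θ x y z • (d x y + d y z) - d x z ∈ P)
    (hP_normal : ∃ N : ℝ, 0 < N ∧ ∀ a b : E, a ∈ P → b - a ∈ P → ‖a‖ ≤ N * ‖b‖)
    (hd_cont : ∀ (x y : ℕ → X) (a b : X),
        (∀ u ∈ interior P, ∃ M : ℕ, ∀ n ≥ M, u - d (x n) a ∈ interior P) →
        (∀ u ∈ interior P, ∃ M : ℕ, ∀ n ≥ M, u - d (y n) b ∈ interior P) →
        Tendsto (fun n => d (x n) (y n)) atTop (nhds (d a b)))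
    (hcomplete : ∀ x : ℕ → X,
        (∀ u ∈ interior P, ∃ M : ℕ, ∀ n ≥ M, ∀ m ≥ M, u - d (x n) (x m) ∈ interior P) →
        ∃ l : X, ∀ u ∈ interior P, ∃ M : ℕ, ∀ n ≥ M, u - d (x n) l ∈ interior P)
    (f : X → X)
    (hreg : ∀ x : X,
        Tendsto (fun n => ‖d (f^[n + 1] x) (f^[n] x)‖) atTop (nhds 0))
    (s : ℝ) (hs0 : 0 < s) (hs1 : s < 1)
    (hf : ∀ x y : X, s • (d x (f x) + d y (f y)) - d (f x) (f y) ∈ P) :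
    ∃ u : X, f u = u ∧ (∀ v : X, f v = v → v = u) ∧
      ∀ x : X, ∀ w ∈ interior P, ∃ M : ℕ, ∀ n ≥ M, w - d (f^[n] x) u ∈ interior P :=
  stmt_12_general P hP_closed hP_conv hP_pointed d hd_nonneg hd_eq_zero hd_symm hP_normal hd_cont
    hcomplete f hreg s hs1 hf
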